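/- (Theorem 3) Let Γ be a finite simple graph with every vertex of positive degree and Σ a motif of Γ on vertices p_1, …, p_m with degrees n_{p_1}, …, n_{p_m} in Γ, and let Γ^Σ be obtained by doubling Σ in Γ. For λ ∈ ℝ define the m×m matrix A(λ) by A(λ)_{ii} = (λ−1)·n_{p_i} and A(λ)_{ij} = 1 if p_i ∼ p_j, 0 otherwise (i ≠ j); equivalently A(λ) = A_Σ + (λ−1)·diag(n_{p_1},…,n_{p_m}) where A_Σ is the adjacency matrix of Σ. Then there exists a nonzero function f on Σ satisfying (1/n_{p_i})·∑_{p_j ∈ Σ, p_j ∼ p_i} f(p_j) = (1−λ)·f(p_i) for all i if and only if det A(λ) = 0, and for every λ with det A(λ) = 0 the number λ is an eigenvalue of the normalized Laplacian of Γ^Σ. -/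

import Mathlib

open Finset

variable {V W : Type*}

/-- `f` is an eigenfunction of the normalized graph Laplacian of `G` for the eigenvalue `μ`:
`f` is nonzero and `∑_{j ∼ i} f j = (1 - μ) · deg i · f i` for every vertex `i`. -/
def SimpleGraph.IsLapEigenfunction [Fintype V] (G : SimpleGraph V) [DecidableRel G.Adj]
    (μ : ℝ) (f : V → ℝ) : Prop :=
  f ≠ 0 ∧ ∀ i, ∑ j ∈ G.neighborFinset i, f j = (1 - μ) * (G.degree i : ℝ) * f i

/-- `μ` is an eigenvalue of the normalized graph Laplacian of `G`. -/
def SimpleGraph.IsLapEigenvalue [Fintype V] (G : SimpleGraph V) [DecidableRel G.Adj]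
    (μ : ℝ) : Prop :=
  ∃ f : V → ℝ, G.IsLapEigenfunction μ f

/-- The graph obtained from `G` by doubling the motif induced on the vertex set `s`:
a copy of the induced subgraph on `s` is added, and the copy `q_α` of each vertex
`p_α ∈ s` is joined to every neighbor of `p_α` in `G` lying outside `s`
(the copies are not joined to any vertex of `s`). -/
def SimpleGraph.doubleMotif [DecidableEq V] (G : SimpleGraph V) (s : Finset V) :
    SimpleGraph (V ⊕ {x // x ∈ s}) where
  Adj x y :=
    match x, y with
    | Sum.inl a, Sum.inl b => G.Adj a b
    | Sum.inl a, Sum.inr b => a ∉ s ∧ G.Adj a b.1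
    | Sum.inr a, Sum.inl b => b ∉ s ∧ G.Adj a.1 b
    | Sum.inr a, Sum.inr b => G.Adj a.1 b.1
  symm := ⟨by
    rintro (a | a) (b | b) h
    · exact G.adj_symm h
    · exact ⟨h.1, G.adj_symm h.2⟩
    · exact ⟨h.1, G.adj_symm h.2⟩
    · exact G.adj_symm h⟩
  loopless := ⟨by
    rintro (a | a) h
    · exact G.irrefl h
    · exact G.irrefl h⟩

instance [DecidableEq V] (G : SimpleGraph V) [DecidableRel G.Adj] (s : Finset V) :
    DecidableRel (G.doubleMotif s).Adj := fun x y =>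
  match x, y with
  | Sum.inl a, Sum.inl b => inferInstanceAs (Decidable (G.Adj a b))
  | Sum.inl a, Sum.inr b => inferInstanceAs (Decidable (a ∉ s ∧ G.Adj a b.1))
  | Sum.inr a, Sum.inl b => inferInstanceAs (Decidable (b ∉ s ∧ G.Adj a.1 b))
  | Sum.inr a, Sum.inr b => inferInstanceAs (Decidable (G.Adj a.1 b.1))

/-- **Theorem 3.** For a motif on the vertex set `s` of `Γ`, let
`A(λ)` be the matrix with diagonal entries `(λ-1)·n_{p_i}` and off-diagonal entries `1`
exactly at adjacent pairs of motif vertices.  A nonzero function on `s` satisfying the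
motif eigenvalue equation for `λ` exists iff `det A(λ) = 0`, and every real `λ` with
`det A(λ) = 0` is an eigenvalue of the normalized Laplacian of the motif-doubled graph. -/
theorem doubleMotif_eigenvalues_det
    {V : Type*} [Fintype V] [DecidableEq V] (G : SimpleGraph V) [DecidableRel G.Adj]
    (hdeg : ∀ v, 0 < G.degree v) (s : Finset V)
    (A : ℝ → Matrix {x // x ∈ s} {x // x ∈ s} ℝ)
    (hA : ∀ (lam : ℝ) (i j : {x // x ∈ s}), A lam i j =
      if i = j then (lam - 1) * (G.degree i.1 : ℝ)
      else if G.Adj i.1 j.1 then 1 else 0) :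
    ∀ lam : ℝ,
      ((∃ f : V → ℝ, (∃ a ∈ s, f a ≠ 0) ∧
            ∀ a ∈ s, ∑ b ∈ s.filter (fun b => G.Adj a b), f b
              = (1 - lam) * (G.degree a : ℝ) * f a)
          ↔ (A lam).det = 0)
        ∧ ((A lam).det = 0 → (G.doubleMotif s).IsLapEigenvalue lam) := by
  classical
  intro lam
  -- `mulVec` computation for the matrix `A lam`
  have hmv : ∀ (g : {x // x ∈ s} → ℝ) (i : {x // x ∈ s}),
      (A lam).mulVec g i
        = (lam - 1) * (G.degree i.1 : ℝ) * g i
          + ∑ j : {x // x ∈ s}, (if G.Adj i.1 j.1 then g j else 0) := by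
    intro g i
    have hterm : ∀ j : {x // x ∈ s}, A lam i j * g j
        = (if i = j then (lam - 1) * (G.degree i.1 : ℝ) * g j else 0)
          + (if G.Adj i.1 j.1 then g j else 0) := by
      intro j
      rw [hA]
      by_cases h : i = j
      · subst h; simp [G.loopless]
      · simp only [if_neg h]
        by_cases hadj : G.Adj i.1 j.1 <;> simp [hadj]
    simp only [Matrix.mulVec, dotProduct]
    rw [Finset.sum_congr rfl fun j _ => hterm j, Finset.sum_add_distrib,
      Finset.sum_ite_eq (Finset.univ) i (fun j => (lam - 1) * (G.degree i.1 : ℝ) * g j),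
      if_pos (Finset.mem_univ i)]
  -- sums over the subtype vs sums over the filtered set
  have hsum : ∀ (f : V → ℝ) (a : V),
      ∑ j : {x // x ∈ s}, (if G.Adj a j.1 then f j.1 else 0)
        = ∑ b ∈ s.filter (fun b => G.Adj a b), f b := by
    intro f a
    rw [Finset.sum_filter, ← Finset.sum_coe_sort s (fun b => if G.Adj a b then f b else 0)]
  -- main equivalence
  have main : (∃ f : V → ℝ, (∃ a ∈ s, f a ≠ 0) ∧
        ∀ a ∈ s, ∑ b ∈ s.filter (fun b => G.Adj a b), f b
          = (1 - lam) * (G.degree a : ℝ) * f a)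
      ↔ (A lam).det = 0 := by
    rw [← Matrix.exists_mulVec_eq_zero_iff]
    constructor
    · rintro ⟨f, ⟨a, ha, hfa⟩, heq⟩
      refine ⟨fun j => f j.1, ?_, ?_⟩
      · intro h0
        exact hfa (congrFun h0 ⟨a, ha⟩)
      · funext i
        rw [hmv, hsum f i.1, heq i.1 i.2]
        simp only [Pi.zero_apply]
        ring
    · rintro ⟨g, hg0, hgv⟩
      refine ⟨fun v => if h : v ∈ s then g ⟨v, h⟩ else 0, ?_, ?_⟩
      · obtain ⟨i, hi⟩ := Function.ne_iff.mp hg0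
        exact ⟨i.1, i.2, by simpa [i.2] using hi⟩
      · intro a ha
        have h1 := congrFun hgv ⟨a, ha⟩
        rw [hmv] at h1
        have h2 : ∑ j : {x // x ∈ s}, (if G.Adj a j.1 then g j else 0)
            = ∑ b ∈ s.filter (fun b => G.Adj a b),
                (if h : b ∈ s then g ⟨b, h⟩ else 0) := by
          rw [← hsum (fun b => if h : b ∈ s then g ⟨b, h⟩ else 0) a]
          refine Finset.sum_congr rfl fun j _ => ?_
          simp [j.2]
        simp only [Pi.zero_apply] at h1
        rw [← h2]
        simp only [dif_pos ha]
        linarith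
  refine ⟨main, fun hdet => ?_⟩
  obtain ⟨g, hg0, hgv⟩ := Matrix.exists_mulVec_eq_zero_iff.mpr hdet
  set H := G.doubleMotif s with hHdef
  have adj_ll : ∀ (a b : V), H.Adj (Sum.inl a) (Sum.inl b) = G.Adj a b := fun _ _ => rfl
  have adj_lr : ∀ (a : V) (b : {x // x ∈ s}),
      H.Adj (Sum.inl a) (Sum.inr b) = (a ∉ s ∧ G.Adj a b.1) := fun _ _ => rfl
  have adj_rl : ∀ (a : {x // x ∈ s}) (b : V),
      H.Adj (Sum.inr a) (Sum.inl b) = (b ∉ s ∧ G.Adj a.1 b) := fun _ _ => rfl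
  have adj_rr : ∀ (a b : {x // x ∈ s}),
      H.Adj (Sum.inr a) (Sum.inr b) = G.Adj a.1 b.1 := fun _ _ => rfl
  -- the motif eigen-equation for g
  have key : ∀ i : {x // x ∈ s},
      ∑ j : {x // x ∈ s}, (if G.Adj i.1 j.1 then g j else 0)
        = (1 - lam) * (G.degree i.1 : ℝ) * g i := by
    intro i
    have := congrFun hgv i
    rw [hmv] at this
    simp only [Pi.zero_apply] at this
    linarith
  -- the eigenfunction on the doubled graph
  set fV : V → ℝ := fun v => if h : v ∈ s then g ⟨v, h⟩ else 0 with hfVdef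
  set F : V ⊕ {x // x ∈ s} → ℝ := Sum.elim fV (fun a => -g a) with hFdef
  have hVsub : ∀ a : V, ∑ v' : V, (if G.Adj a v' then fV v' else 0)
      = ∑ j : {x // x ∈ s}, (if G.Adj a j.1 then g j else 0) := by
    intro a
    calc ∑ v' : V, (if G.Adj a v' then fV v' else 0)
        = ∑ v' : V, (if v' ∈ s then (if G.Adj a v' then fV v' else 0) else 0) := by
          refine Finset.sum_congr rfl fun v' _ => ?_
          by_cases h : v' ∈ s
          · rw [if_pos h]
          · simp [hfVdef, h]
      _ = ∑ v' ∈ s, (if G.Adj a v' then fV v' else 0) := by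
          rw [Finset.sum_ite_mem, Finset.univ_inter]
      _ = ∑ j : {x // x ∈ s}, (if G.Adj a j.1 then fV j.1 else 0) :=
          (Finset.sum_coe_sort s _).symm
      _ = ∑ j : {x // x ∈ s}, (if G.Adj a j.1 then g j else 0) := by
          refine Finset.sum_congr rfl fun j _ => ?_
          simp [hfVdef, j.2]
  -- splitting sums and degrees over the sum type
  have hnb : ∀ (i : V ⊕ {x // x ∈ s}),
      ∑ j ∈ H.neighborFinset i, F j
        = (∑ v : V, (if H.Adj i (Sum.inl v) then F (Sum.inl v) else 0))
          + ∑ a : {x // x ∈ s}, (if H.Adj i (Sum.inr a) then F (Sum.inr a) else 0) := by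
    intro i
    rw [SimpleGraph.neighborFinset_eq_filter, Finset.sum_filter, Fintype.sum_sum_type]
  have hdegsplit : ∀ (i : V ⊕ {x // x ∈ s}),
      H.degree i
        = (∑ v : V, (if H.Adj i (Sum.inl v) then 1 else 0))
          + ∑ a : {x // x ∈ s}, (if H.Adj i (Sum.inr a) then 1 else 0) := by
    intro i
    rw [← SimpleGraph.card_neighborFinset_eq_degree, SimpleGraph.neighborFinset_eq_filter,
      Finset.card_filter, Fintype.sum_sum_type]
  have hdegG : ∀ v : V, G.degree v = ∑ v' : V, (if G.Adj v v' then 1 else 0) := by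
    intro v
    rw [← SimpleGraph.card_neighborFinset_eq_degree, SimpleGraph.neighborFinset_eq_filter,
      Finset.card_filter]
  -- degree of an original motif vertex
  have hdegl : ∀ v : V, v ∈ s → H.degree (Sum.inl v) = G.degree v := by
    intro v hv
    rw [hdegsplit, hdegG]
    have h2 : ∑ a : {x // x ∈ s}, (if H.Adj (Sum.inl v) (Sum.inr a) then 1 else 0) = 0 := by
      refine Finset.sum_eq_zero fun a _ => ?_
      simp [adj_lr, hv]
    rw [h2, add_zero]
    refine Finset.sum_congr rfl fun v' _ => ?_
    simp only [adj_ll]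
  -- degree of a copied motif vertex
  have hdegr : ∀ a : {x // x ∈ s}, H.degree (Sum.inr a) = G.degree a.1 := by
    intro a
    rw [hdegsplit, hdegG]
    have hsub : ∑ b : {x // x ∈ s}, (if H.Adj (Sum.inr a) (Sum.inr b) then 1 else 0)
        = ∑ v' : V, (if v' ∈ s ∧ G.Adj a.1 v' then 1 else 0) := by
      calc ∑ b : {x // x ∈ s}, (if H.Adj (Sum.inr a) (Sum.inr b) then (1:ℕ) else 0)
          = ∑ b ∈ s, (if G.Adj a.1 b then 1 else 0) := by
            rw [← Finset.sum_coe_sort s (fun b => if G.Adj a.1 b then (1:ℕ) else 0)]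
            refine Finset.sum_congr rfl fun b _ => by simp only [adj_rr]
        _ = ∑ v' ∈ s, (if v' ∈ s ∧ G.Adj a.1 v' then 1 else 0) :=
            Finset.sum_congr rfl fun v' hv' => by
              by_cases h : G.Adj a.1 v' <;> simp [h, hv']
        _ = ∑ v' : V, (if v' ∈ s ∧ G.Adj a.1 v' then 1 else 0) :=
            Finset.sum_subset (Finset.subset_univ s) (fun v' _ hv' => by simp [hv'])
    rw [hsub]
    rw [← Finset.sum_add_distrib]
    refine (Finset.sum_congr rfl fun v' _ => ?_).symm
    simp only [adj_rl]
    by_cases h1 : v' ∈ s <;> by_cases h2 : G.Adj a.1 v' <;> simp [h1, h2]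
  -- F is nonzero
  obtain ⟨i0, hi0⟩ := Function.ne_iff.mp hg0
  refine ⟨F, ?_, ?_⟩
  · intro hF0
    apply hi0
    have := congrFun hF0 (Sum.inr i0)
    simpa [hFdef] using this
  -- the eigen-equation at every vertex of the doubled graph
  rintro (v | a)
  · rw [hnb]
    by_cases hv : v ∈ s
    · have h2 : ∑ a : {x // x ∈ s}, (if H.Adj (Sum.inl v) (Sum.inr a) then F (Sum.inr a) else 0)
          = 0 := by
        refine Finset.sum_eq_zero fun a _ => ?_
        simp [adj_lr, hv]
      have h1 : ∑ v' : V, (if H.Adj (Sum.inl v) (Sum.inl v') then F (Sum.inl v') else 0)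
          = ∑ j : {x // x ∈ s}, (if G.Adj v j.1 then g j else 0) := by
        rw [← hVsub v]
        refine Finset.sum_congr rfl fun v' _ => ?_
        simp only [adj_ll, hFdef, Sum.elim_inl]
      rw [h1, h2, add_zero, key ⟨v, hv⟩, hdegl v hv]
      simp [hFdef, hfVdef, hv]
    · have h1 : ∑ v' : V, (if H.Adj (Sum.inl v) (Sum.inl v') then F (Sum.inl v') else 0)
          = ∑ j : {x // x ∈ s}, (if G.Adj v j.1 then g j else 0) := by
        rw [← hVsub v]
        refine Finset.sum_congr rfl fun v' _ => ?_
        simp only [adj_ll, hFdef, Sum.elim_inl]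
      have h2 : ∑ a : {x // x ∈ s}, (if H.Adj (Sum.inl v) (Sum.inr a) then F (Sum.inr a) else 0)
          = -∑ j : {x // x ∈ s}, (if G.Adj v j.1 then g j else 0) := by
        rw [← Finset.sum_neg_distrib]
        refine Finset.sum_congr rfl fun a _ => ?_
        simp only [adj_lr, hFdef, Sum.elim_inr]
        by_cases h : G.Adj v a.1 <;> simp [h, hv]
      rw [h1, h2, add_neg_cancel]
      have : F (Sum.inl v) = 0 := by simp [hFdef, hfVdef, hv]
      rw [this, mul_zero]
  · rw [hnb]
    have h1 : ∑ v' : V, (if H.Adj (Sum.inr a) (Sum.inl v') then F (Sum.inl v') else 0) = 0 := by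
      refine Finset.sum_eq_zero fun v' _ => ?_
      simp only [adj_rl]
      by_cases h : v' ∉ s ∧ G.Adj (a.1) v'
      · rw [if_pos h]
        simp [hFdef, hfVdef, h.1]
      · rw [if_neg h]
    have h2 : ∑ b : {x // x ∈ s}, (if H.Adj (Sum.inr a) (Sum.inr b) then F (Sum.inr b) else 0)
        = -∑ j : {x // x ∈ s}, (if G.Adj a.1 j.1 then g j else 0) := by
      rw [← Finset.sum_neg_distrib]
      refine Finset.sum_congr rfl fun b _ => ?_
      simp only [adj_rr, hFdef, Sum.elim_inr]
      by_cases h : G.Adj a.1 b.1 <;> simp [h]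
    rw [h1, h2, zero_add, key a, hdegr a]
    have : F (Sum.inr a) = -g a := by simp [hFdef]
    rw [this]
    ring
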